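/- arXiv:1111.4995 — 3 statements merged into one kernel-verified Lean document; each statement's English description precedes it below -/
import Mathlib

section
/- Let G be a topological group with a neighborhood basis 𝒩 of the identity consisting of open subgroups, and let L = {V·A : A ⊆ G, V ∈ 𝒩}. For ultrafilters u, v on G, define u* to be the filter generated by {V·A : A ∈ u, V ∈ 𝒩}, and define u ∼ v iff u* = v*. Then u ∼ v if and only if u ∩ L = v ∩ L (as ultrafilters on the Boolean algebra L). -/
/-!
Since every `V ∈ 𝒩` is a subgroup, `V * (V * A) = V * A`, and `V * A ∈ u` whenever `A ∈ u`.
Hence the generators `V * A` (`A ∈ u`) of `u*` are exactly the members of `u` lying in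
`L = saturatedSets 𝒩`, so `u*` is generated by the trace `u ∩ L`. Conversely every member of `u*`
lies in `u`, so `u ∩ L = u* ∩ L` is determined by `u*`.
-/

open Pointwise Filter

theorem Subgroup.coe_mul_coe_mul {G : Type*} [Group G] (V : Subgroup G) (A : Set G) :
    (V : Set G) * ((V : Set G) * A) = (V : Set G) * A := by
  rw [← mul_assoc, coe_mul_coe]

section SaturatedSets

variable {G : Type*} [Group G] (𝒩 : Set (Subgroup G))

def saturatedSets : Set (Set G) :=
  {S | ∃ V ∈ 𝒩, ∃ A : Set G, S = (V : Set G) * A}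

def saturatedTrace (f : Filter G) : Set (Set G) :=
  {S | S ∈ saturatedSets 𝒩 ∧ S ∈ f}

theorem saturations_eq_saturatedTrace (f : Filter G) :
    {S : Set G | ∃ V ∈ 𝒩, ∃ A ∈ f, S = (V : Set G) * A} = saturatedTrace 𝒩 f := by
  ext S
  constructor
  · rintro ⟨V, hV, A, hA, rfl⟩
    exact ⟨⟨V, hV, A, rfl⟩, mem_of_superset hA (Set.subset_mul_right A V.one_mem)⟩
  · rintro ⟨⟨V, hV, A, rfl⟩, hS⟩
    exact ⟨V, hV, V * A, hS, (V.coe_mul_coe_mul A).symm⟩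

theorem le_generate_saturatedTrace (f : Filter G) : f ≤ generate (saturatedTrace 𝒩 f) :=
  le_generate_iff.2 fun _ hS => hS.2

theorem saturatedTrace_generate (f : Filter G) :
    saturatedTrace 𝒩 (generate (saturatedTrace 𝒩 f)) = saturatedTrace 𝒩 f := by
  ext S
  exact ⟨fun hS => ⟨hS.1, le_generate_saturatedTrace 𝒩 f hS.2⟩,
    fun hS => ⟨hS.1, mem_generate_of_mem hS⟩⟩

theorem generate_saturatedTrace_inj (f g : Filter G) :
    generate (saturatedTrace 𝒩 f) = generate (saturatedTrace 𝒩 g) ↔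
      saturatedTrace 𝒩 f = saturatedTrace 𝒩 g := by
  refine ⟨fun h => ?_, fun h => h ▸ rfl⟩
  rw [← saturatedTrace_generate 𝒩 f, h, saturatedTrace_generate]

end SaturatedSets

theorem stmt_1_general {G : Type*} [Group G]
    (𝒩 : Set (Subgroup G))
    (u v : Ultrafilter G) :
    Filter.generate {S : Set G | ∃ V ∈ 𝒩, ∃ A ∈ u, S = (V : Set G) * A} =
        Filter.generate {S : Set G | ∃ V ∈ 𝒩, ∃ A ∈ v, S = (V : Set G) * A} ↔
      {S : Set G | (∃ V ∈ 𝒩, ∃ A : Set G, S = (V : Set G) * A) ∧ S ∈ u} =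
        {S : Set G | (∃ V ∈ 𝒩, ∃ A : Set G, S = (V : Set G) * A) ∧ S ∈ v} := by
  simp only [← Ultrafilter.mem_coe]
  rw [saturations_eq_saturatedTrace 𝒩 u, saturations_eq_saturatedTrace 𝒩 v]
  exact generate_saturatedTrace_inj 𝒩 u v

/-- For ultrafilters `u, v` on `G`, with `u*` the filter generated by
`{V·A : A ∈ u, V ∈ 𝒩}`, we have `u* = v*` iff `u` and `v` have the same trace on the
Boolean algebra `L = {V·A : A ⊆ G, V ∈ 𝒩}`. -/
theorem stmt_1 {G : Type*} [Group G] [TopologicalSpace G] [IsTopologicalGroup G]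
    (𝒩 : Set (Subgroup G)) (hopen : ∀ V ∈ 𝒩, IsOpen (V : Set G))
    (hbasis : (nhds (1 : G)).HasBasis (· ∈ 𝒩) (fun V => (V : Set G)))
    (u v : Ultrafilter G) :
    Filter.generate {S : Set G | ∃ V ∈ 𝒩, ∃ A ∈ u, S = (V : Set G) * A} =
        Filter.generate {S : Set G | ∃ V ∈ 𝒩, ∃ A ∈ v, S = (V : Set G) * A} ↔
      {S : Set G | (∃ V ∈ 𝒩, ∃ A : Set G, S = (V : Set G) * A) ∧ S ∈ u} =
        {S : Set G | (∃ V ∈ 𝒩, ∃ A : Set G, S = (V : Set G) * A) ∧ S ∈ v} :=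
  stmt_1_general 𝒩 u v
end

section
/- Let G be a group acting on the set of ultrafilters on a G-invariant Boolean algebra 𝒜 of subsets of G (invariant under left translation) by g·u = {g·A : A ∈ u}. If every nonempty element of 𝒜 is syndetic, then the Stone space of 𝒜 with this G-action is a minimal G-flow: for every ultrafilter u on 𝒜 and nonempty A ∈ 𝒜, the set {g ∈ G : A ∈ g·u} is syndetic. -/
/-!
An ultrafilter `u` on `𝒜` is prime: if a finite union of members of `𝒜` lies in `u`, one of
them does, since otherwise their complements, hence the complement of the union, lie in `u`,
and then so does `∅`. Translating a finite cover of `G` by the `g • A` by `h⁻¹` gives a cover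
that lies in `u`, so some `(h⁻¹ * g) • A` lies in `u`, i.e. `h ∈ g • {k | k⁻¹ • A ∈ u}`.
-/

open Pointwise Set

theorem exists_mem_of_biUnion_mem_ultrafilter {α ι : Type*} {𝒜 u : Set (Set α)}
    (hu𝒜 : u ⊆ 𝒜) (huniv : univ ∈ u) (hultra : ∀ A ∈ 𝒜, (A ∈ u ↔ Aᶜ ∉ u))
    (hinteru : ∀ A ∈ u, ∀ B ∈ u, A ∩ B ∈ u)
    {s : Finset ι} {f : ι → Set α} (hf : ∀ i ∈ s, f i ∈ 𝒜) (hs : ⋃ i ∈ s, f i ∈ u) :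
    ∃ i ∈ s, f i ∈ u := by
  by_contra! hnot
  have hcompl : ∀ i ∈ s, (f i)ᶜ ∈ u := fun i hi =>
    not_not.mp fun h => hnot i hi ((hultra _ (hf i hi)).mpr h)
  have hinter : (⋃ i ∈ s, f i)ᶜ ∈ u := by
    rw [compl_iUnion₂, ← Finset.inf_set_eq_iInter]
    exact Finset.inf_mem u huniv hinteru s _ hcompl
  have hempty : (∅ : Set α) ∈ u := inter_compl_self (⋃ i ∈ s, f i) ▸ hinteru _ hs _ hinter
  exact (hultra _ (hu𝒜 huniv)).mp huniv (by simpa using hempty)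

theorem stmt_7_general {G : Type*} [Group G] (𝒜 : Set (Set G))
    (hinv : ∀ g : G, ∀ A ∈ 𝒜, g • A ∈ 𝒜)
    (hsyn : ∀ A ∈ 𝒜, A.Nonempty → ∃ s : Finset G, ⋃ g ∈ s, g • A = Set.univ)
    (u : Set (Set G)) (hu𝒜 : u ⊆ 𝒜) (huniv : Set.univ ∈ u)
    (hultra : ∀ A ∈ 𝒜, (A ∈ u ↔ Aᶜ ∉ u))
    (hinteru : ∀ A ∈ u, ∀ B ∈ u, A ∩ B ∈ u) :
    ∀ A ∈ 𝒜, A.Nonempty →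
      ∃ s : Finset G, ⋃ g ∈ s, g • {h : G | h⁻¹ • A ∈ u} = Set.univ := by
  intro A hA hAne
  obtain ⟨s, hs⟩ := hsyn A hA hAne
  refine ⟨s, eq_univ_of_forall fun h => ?_⟩
  have hcover : ⋃ g ∈ s, (h⁻¹ * g) • A ∈ u := by
    simpa only [mul_smul, ← smul_set_iUnion₂, hs, smul_set_univ] using huniv
  obtain ⟨g, hg, hgu⟩ := exists_mem_of_biUnion_mem_ultrafilter hu𝒜 huniv hultra hinteru
    (fun g _ => hinv _ _ hA) hcover
  refine mem_iUnion₂.mpr ⟨g, hg, mem_smul_set_iff_inv_smul_mem.mpr ?_⟩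
  simpa [mul_inv_rev] using hgu

/-- If `𝒜` is a left-translation-invariant Boolean algebra of subsets of a group
`G` all of whose nonempty members are syndetic, and `u` is an ultrafilter on `𝒜`, then for
every nonempty `A ∈ 𝒜` the set `{g : A ∈ g·u} = {g : g⁻¹·A ∈ u}` is syndetic, i.e. the Stone
space of `𝒜` with the action `g·u = {g·A : A ∈ u}` is a minimal `G`-flow. -/
theorem stmt_7 {G : Type*} [Group G] (𝒜 : Set (Set G))
    (hcompl𝒜 : ∀ A ∈ 𝒜, Aᶜ ∈ 𝒜)
    (hinter𝒜 : ∀ A ∈ 𝒜, ∀ B ∈ 𝒜, A ∩ B ∈ 𝒜)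
    (hinv : ∀ g : G, ∀ A ∈ 𝒜, g • A ∈ 𝒜)
    (hsyn : ∀ A ∈ 𝒜, A.Nonempty → ∃ s : Finset G, ⋃ g ∈ s, g • A = Set.univ)
    (u : Set (Set G)) (hu𝒜 : u ⊆ 𝒜) (huniv : Set.univ ∈ u)
    (hultra : ∀ A ∈ 𝒜, (A ∈ u ↔ Aᶜ ∉ u))
    (hinteru : ∀ A ∈ u, ∀ B ∈ u, A ∩ B ∈ u)
    (hmono : ∀ A ∈ u, ∀ B ∈ 𝒜, A ⊆ B → B ∈ u) :
    ∀ A ∈ 𝒜, A.Nonempty →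
      ∃ s : Finset G, ⋃ g ∈ s, g • {h : G | h⁻¹ • A ∈ u} = Set.univ :=
  stmt_7_general 𝒜 hinv hsyn u hu𝒜 huniv hultra hinteru
end

section
/- Let G be an extremely amenable topological group, A a set on which G acts transitively with open stabilizers, and c : A → {1,…,k} a coloring. Consider the induced continuous action of G on the compact space {1,…,k}^A by (g·x)(a) = x(g⁻¹·a), and let Y be the orbit closure of c. Then any G-fixed point d in Y is a constant function, and consequently for every finite subset H ⊆ A there exist g ∈ G and i ∈ {1,…,k} such that c(g·a) = i for all a ∈ H. -/
/-!
A `G`-fixed point of the shift action on colorings `A → Fin k` is constant on every orbit of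
`G` on `A`, hence constant since the action is transitive. Open stabilizers make the shift
action jointly continuous, so extreme amenability yields such a fixed point in the orbit closure
of `c`. Being in the closure of the orbit of `c`, that constant coloring agrees on any finite
`H` with some translate of `c`.
-/

open Filter Topology

universe u

def ExtremelyAmenable (G : Type u) [Monoid G] [TopologicalSpace G] : Prop :=
  ∀ (X : Type u) [TopologicalSpace X] [CompactSpace X] [T2Space X] [Nonempty X]
    [MulAction G X], ContinuousSMul G X → ∃ x : X, ∀ g : G, g • x = x

theorem ExtremelyAmenable.exists_fixed_mem_closure_orbit {G X : Type u} [Monoid G]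
    [TopologicalSpace G] (hG : ExtremelyAmenable G) [TopologicalSpace X] [CompactSpace X]
    [T2Space X] [MulAction G X] [ContinuousSMul G X] (x : X) :
    ∃ y ∈ closure (MulAction.orbit G x), ∀ g : G, g • y = y := by
  let Y : SubMulAction G X :=
    ⟨closure (MulAction.orbit G x), fun g _ hy => smul_closure_orbit_subset g x ⟨_, hy, rfl⟩⟩
  have : CompactSpace Y := isCompact_iff_compactSpace.mp isClosed_closure.isCompact
  have : Nonempty Y := ⟨⟨x, subset_closure (MulAction.mem_orbit_self x)⟩⟩
  obtain ⟨y, hy⟩ := hG Y inferInstance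
  exact ⟨y, y.2, fun g => congrArg Subtype.val (hy g)⟩

section Shift

variable {G A X : Type*} [Group G] [MulAction G A]

-- Only a local instance: globally it would clash with the pointwise action `Pi.mulAction`.
abbrev shiftAction (X : Type*) : MulAction G (A → X) where
  smul g x a := x (g⁻¹ • a)
  one_smul x := funext fun a => congrArg x (by rw [inv_one, one_smul])
  mul_smul g h x := funext fun a => congrArg x (by rw [mul_inv_rev, mul_smul])

attribute [local instance] shiftAction

theorem shift_apply (g : G) (x : A → X) (a : A) : (g • x) a = x (g⁻¹ • a) := rfl

theorem apply_eq_of_forall_smul_eq [MulAction.IsPretransitive G A] {d : A → X}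
    (hd : ∀ g : G, g • d = d) (a b : A) : d a = d b := by
  obtain ⟨g, rfl⟩ := MulAction.exists_smul_eq G b a
  simpa [shift_apply] using (congrFun (hd g) (g • b)).symm

theorem eventually_inv_smul_eq [TopologicalSpace G] [ContinuousMul G]
    (hopen : ∀ a : A, IsOpen {g : G | g • a = a}) (a : A) (g₀ : G) :
    ∀ᶠ g in 𝓝 g₀, g⁻¹ • a = g₀⁻¹ • a := by
  have hcoset : IsOpen ((g₀⁻¹ * ·) ⁻¹' {g : G | g • g₀⁻¹ • a = g₀⁻¹ • a}) :=
    (hopen _).preimage (continuous_const_mul _)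
  filter_upwards [hcoset.mem_nhds (by simp)] with g hg
  simp only [Set.mem_preimage, Set.mem_ofPred_eq, mul_smul, smul_left_cancel_iff] at hg
  rw [inv_smul_eq_iff, hg]

theorem continuousSMul_shift [TopologicalSpace G] [ContinuousMul G] [TopologicalSpace X]
    (hopen : ∀ a : A, IsOpen {g : G | g • a = a}) : ContinuousSMul G (A → X) := by
  refine ⟨continuous_pi fun a => continuous_iff_continuousAt.mpr fun p => ?_⟩
  -- near `p`, the coordinate `a` of `g • x` is the fixed coordinate `p.1⁻¹ • a` of `x`
  refine ((continuous_apply (p.1⁻¹ • a)).comp continuous_snd).continuousAt.congr ?_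
  filter_upwards [continuous_fst.continuousAt.eventually (eventually_inv_smul_eq hopen a p.1)]
    with q hq
  simp only [Function.comp_apply, shift_apply, hq]

end Shift

theorem exists_mem_eqOn_of_mem_closure {A X : Type*} [TopologicalSpace X] [DiscreteTopology X]
    {S : Set (A → X)} {d : A → X} (hd : d ∈ closure S) (H : Finset A) :
    ∃ y ∈ S, ∀ a ∈ H, y a = d a := by
  have hopen : IsOpen ((H : Set A).pi fun a => {d a}) :=
    isOpen_set_pi H.finite_toSet fun a _ => isOpen_discrete _
  obtain ⟨y, hy, hyS⟩ := mem_closure_iff.mp hd _ hopen fun a _ => rfl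
  exact ⟨y, hyS, hy⟩

attribute [local instance] shiftAction

/-- Let `G` be an extremely amenable topological group acting transitively with
open stabilizers on a set `A`, and let `c : A → Fin k` be a coloring, `k ≥ 1`. Consider the
induced action of `G` on `(Fin k)^A` given by `(g·x)(a) = x(g⁻¹·a)` and the orbit closure `Y`
of `c`. Then every `G`-fixed point `d ∈ Y` is constant, and consequently for every finite
`H ⊆ A` there are `g ∈ G` and a color `i` with `c(g·a) = i` for all `a ∈ H`. -/
theorem stmt_19 {G A : Type u} [Group G] [TopologicalSpace G] [IsTopologicalGroup G]
    [MulAction G A]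
    (htrans : ∀ a b : A, ∃ g : G, g • a = b)
    (hopen : ∀ a : A, IsOpen {g : G | g • a = a})
    (k : ℕ) (hk : 0 < k) (c : A → Fin k)
    (hEA : ∀ (X : Type u) [TopologicalSpace X] [CompactSpace X] [T2Space X] [Nonempty X]
        [MulAction G X], ContinuousSMul G X → ∃ x : X, ∀ g : G, g • x = x) :
    letI : TopologicalSpace (Fin k) := ⊥
    (∀ d : A → Fin k,
        d ∈ closure {x : A → Fin k | ∃ g : G, x = fun a => c (g⁻¹ • a)} →
        (∀ g : G, (fun a => d (g⁻¹ • a)) = d) →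
        ∃ i : Fin k, ∀ a : A, d a = i) ∧
    (∀ H : Finset A, ∃ g : G, ∃ i : Fin k, ∀ a ∈ H, c (g • a) = i) := by
  let _ : TopologicalSpace (Fin k) := ⊥
  have : DiscreteTopology (Fin k) := ⟨rfl⟩
  have : MulAction.IsPretransitive G A := ⟨htrans⟩
  have fixed_const : ∀ d : A → Fin k, (∀ g : G, g • d = d) → ∃ i : Fin k, ∀ a : A, d a = i := by
    intro d hd
    rcases isEmpty_or_nonempty A with _ | ⟨⟨a₀⟩⟩
    · exact ⟨⟨0, hk⟩, isEmptyElim⟩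
    · exact ⟨d a₀, fun a => apply_eq_of_forall_smul_eq hd a a₀⟩
  refine ⟨fun d _ => fixed_const d, fun H => ?_⟩
  have : ContinuousSMul G (A → Fin k) := continuousSMul_shift hopen
  obtain ⟨d, hdY, hd⟩ := ExtremelyAmenable.exists_fixed_mem_closure_orbit hEA c
  obtain ⟨i, hi⟩ := fixed_const d hd
  obtain ⟨_, ⟨g, rfl⟩, hg⟩ := exists_mem_eqOn_of_mem_closure hdY H
  exact ⟨g⁻¹, i, fun a ha => (hg a ha).trans (hi a)⟩
end
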